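/- Let k, p₀, p₁₂, s be the polynomial functions on ℝ⁷ (with coordinates t₁, t₂, t₃, t₄, t₁₂, t₁₃, t₂₃) given by k := t₁₂² + t₂₃² + t₁₃² + t₁₂t₂₃t₁₃ − c₁₂t₁₂ − c₂₃t₂₃ − c₁₃t₁₃ − c₀, p₀ := c₁₂ − t₂₃t₁₃ − t₁₂, p₁₂ := t₁₂, s := 2t₂₃² − c₂₃t₂₃ − 2t₁₃² + c₁₃t₁₃, where c₁₂ := t₁t₂ + t₃t₄, c₂₃ := t₂t₃ + t₁t₄, c₁₃ := t₁t₃ + t₂t₄, c₀ := 4 − t₁² − t₂² − t₃² − t₄² − t₁t₂t₃t₄. For v ∈ ℝ⁷ let a(v), b(v), c(v) ∈ ℝ³ be the gradients of k, p₀, p₁₂ with respect to (t₁₂, t₁₃, t₂₃) evaluated at v. If the cross products a(v) × b(v) and a(v) × c(v) are linearly dependent in ℝ³, then s(v) = 0. -/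
import Mathlib


namespace FrickeStmt7

open MvPolynomial

/-- The seven trace variables `t₁, t₂, t₃, t₄, t₁₂, t₁₃, t₂₃` of `ℝ[K]`. -/
noncomputable def t₁ : MvPolynomial (Fin 7) ℝ := X 0
noncomputable def t₂ : MvPolynomial (Fin 7) ℝ := X 1
noncomputable def t₃ : MvPolynomial (Fin 7) ℝ := X 2
noncomputable def t₄ : MvPolynomial (Fin 7) ℝ := X 3
noncomputable def t₁₂ : MvPolynomial (Fin 7) ℝ := X 4
noncomputable def t₁₃ : MvPolynomial (Fin 7) ℝ := X 5
noncomputable def t₂₃ : MvPolynomial (Fin 7) ℝ := X 6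

noncomputable def c₁₂ : MvPolynomial (Fin 7) ℝ := t₁ * t₂ + t₃ * t₄
noncomputable def c₂₃ : MvPolynomial (Fin 7) ℝ := t₂ * t₃ + t₁ * t₄
noncomputable def c₁₃ : MvPolynomial (Fin 7) ℝ := t₁ * t₃ + t₂ * t₄
noncomputable def c₀ : MvPolynomial (Fin 7) ℝ :=
  4 - t₁ ^ 2 - t₂ ^ 2 - t₃ ^ 2 - t₄ ^ 2 - t₁ * t₂ * t₃ * t₄

/-- The Fricke polynomial `k`. -/
noncomputable def k : MvPolynomial (Fin 7) ℝ :=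
  t₁₂ ^ 2 + t₂₃ ^ 2 + t₁₃ ^ 2 + t₁₂ * t₂₃ * t₁₃
    - c₁₂ * t₁₂ - c₂₃ * t₂₃ - c₁₃ * t₁₃ - c₀

/-- The trace polynomial `p₀`. -/
noncomputable def p₀ : MvPolynomial (Fin 7) ℝ := c₁₂ - t₂₃ * t₁₃ - t₁₂

/-- The trace polynomial `p₁₂`. -/
noncomputable def p₁₂ : MvPolynomial (Fin 7) ℝ := t₁₂

/-- The polynomial `s` cutting out the dependency locus. -/
noncomputable def s : MvPolynomial (Fin 7) ℝ :=
  2 * t₂₃ ^ 2 - c₂₃ * t₂₃ - 2 * t₁₃ ^ 2 + c₁₃ * t₁₃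

/-- The index in `Fin 7` of the `i`-th of the three variables `t₁₂, t₁₃, t₂₃`. -/
def idx (i : Fin 3) : Fin 7 := ⟨4 + (i : ℕ), by omega⟩

/-- The gradient of a polynomial with respect to `(t₁₂, t₁₃, t₂₃)`, evaluated at
a point `v ∈ ℝ⁷`. -/
noncomputable def grad (f : MvPolynomial (Fin 7) ℝ) (v : Fin 7 → ℝ) : Fin 3 → ℝ :=
  fun i => eval v (pderiv (idx i) f)


lemma pderiv_four (i : Fin 7) : pderiv i (4 : MvPolynomial (Fin 7) ℝ) = 0 := by
  rw [show (4:MvPolynomial (Fin 7) ℝ) = C 4 from (map_ofNat C 4).symm, pderiv_C]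

lemma gk0 (v : Fin 7 → ℝ) : grad k v 0 = 2 * v 4 + v 6 * v 5 - (v 0 * v 1 + v 2 * v 3) := by
  simp [grad, idx, k, c₁₂, c₂₃, c₁₃, c₀, t₁, t₂, t₃, t₄, t₁₂, t₁₃, t₂₃, pderiv_four,
    Pi.single_apply]
  try ring

lemma gk1 (v : Fin 7 → ℝ) : grad k v 1 = 2 * v 5 + v 4 * v 6 - (v 0 * v 2 + v 1 * v 3) := by
  simp [grad, idx, k, c₁₂, c₂₃, c₁₃, c₀, t₁, t₂, t₃, t₄, t₁₂, t₁₃, t₂₃, pderiv_four,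
    Pi.single_apply]
  try ring

lemma gk2 (v : Fin 7 → ℝ) : grad k v 2 = 2 * v 6 + v 4 * v 5 - (v 1 * v 2 + v 0 * v 3) := by
  simp [grad, idx, k, c₁₂, c₂₃, c₁₃, c₀, t₁, t₂, t₃, t₄, t₁₂, t₁₃, t₂₃, pderiv_four,
    Pi.single_apply]
  try ring

lemma gb (v : Fin 7 → ℝ) : grad p₀ v = ![-1, -(v 6), -(v 5)] := by
  funext i
  fin_cases i <;>
    simp [grad, idx, p₀, c₁₂, t₁, t₂, t₃, t₄, t₁₂, t₁₃, t₂₃, Pi.single_apply]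

lemma gc (v : Fin 7 → ℝ) : grad p₁₂ v = ![1, 0, 0] := by
  funext i
  fin_cases i <;> simp [grad, idx, p₁₂, t₁₂, Pi.single_apply]

lemma seval (v : Fin 7 → ℝ) :
    eval v s = 2 * v 6 ^ 2 - (v 1 * v 2 + v 0 * v 3) * v 6
      - 2 * v 5 ^ 2 + (v 0 * v 2 + v 1 * v 3) * v 5 := by
  simp [s, c₂₃, c₁₃, t₁, t₂, t₃, t₄, t₁₃, t₂₃]

/-- Lemma 3.3: if the cross products `∇k × ∇p₀` and `∇k × ∇p₁₂` (gradients taken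
with respect to `(t₁₂, t₁₃, t₂₃)`) are linearly dependent at `v ∈ ℝ⁷`, then `s(v) = 0`. -/
theorem dependency_locus (v : Fin 7 → ℝ)
    (h : ¬ LinearIndependent ℝ
      ![crossProduct (grad k v) (grad p₀ v), crossProduct (grad k v) (grad p₁₂ v)]) :
    eval v s = 0 := by
  have h : crossProduct (crossProduct (grad k v) (grad p₀ v))
      (crossProduct (grad k v) (grad p₁₂ v)) = 0 := by
    by_contra hne
    exact h (crossProduct_ne_zero_iff_linearIndependent.mp hne)
  have h1 : (crossProduct (crossProduct (grad k v) (grad p₀ v))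
      (crossProduct (grad k v) (grad p₁₂ v))) 1 = 0 := by rw [h]; rfl
  have h2 : (crossProduct (crossProduct (grad k v) (grad p₀ v))
      (crossProduct (grad k v) (grad p₁₂ v))) 2 = 0 := by rw [h]; rfl
  rw [gb, gc] at h1 h2
  simp only [cross_apply, Matrix.cons_val_zero, Matrix.cons_val_one, Matrix.head_cons,
    Matrix.cons_val_two, Matrix.tail_cons] at h1 h2
  rw [gk0, gk1, gk2] at h1 h2
  have hsq : eval v s ^ 2 = 0 := by
    rw [seval]
    linear_combination v 6 * h2 - v 5 * h1
  exact pow_eq_zero_iff (two_ne_zero) |>.mp hsq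

end FrickeStmt7
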